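/- arXiv:2605.16615 — 5 statements merged into one kernel-verified Lean document; each statement's English description precedes it below -/
import Mathlib

section
/- Let F : ℝ → ℝ be monotone non-decreasing, and let a, b ∈ ℝ³. Define the 3×3 matrix M by M i j = F (a i + b j). Then it is impossible that both chains of strict inequalities hold: M 1 2 < M 2 1 < M 3 1 < M 2 2 and M 2 2 < M 1 3 < M 2 3 < M 3 2 (indices in {1,2,3}). -/
/-- A 3×3 matrix `M i j = F (a i + b j)` with `F` non-decreasing cannot satisfy
both strict chains `M₁₂ < M₂₁ < M₃₁ < M₂₂` and `M₂₂ < M₁₃ < M₂₃ < M₃₂`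
(here indices are 0-based, so matrix entry `(i,j)` of the statement is `M (i-1) (j-1)`). -/
theorem stmt_1 (F : ℝ → ℝ) (hF : Monotone F) (a b : Fin 3 → ℝ)
    (M : Fin 3 → Fin 3 → ℝ) (hM : ∀ i j, M i j = F (a i + b j)) :
    ¬ ((M 0 1 < M 1 0 ∧ M 1 0 < M 2 0 ∧ M 2 0 < M 1 1) ∧
       (M 1 1 < M 0 2 ∧ M 0 2 < M 1 2 ∧ M 1 2 < M 2 1)) := by
  rintro ⟨⟨h₁, -, h₃⟩, ⟨h₄, -, h₆⟩⟩
  simp only [hM] at h₁ h₃ h₄ h₆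
  -- Both sides of the sum of these four strict inequalities equal `2 a 1 + a 0 + a 2 + 2 b 1 + b 0 + b 2`.
  linarith [hF.reflect_lt h₁, hF.reflect_lt h₃, hF.reflect_lt h₄, hF.reflect_lt h₆]
end

section
/- Let F : ℝ → ℝ be monotone non-decreasing, a ∈ ℝ⁴, b ∈ ℝ³ (not necessarily monotone), and constants γ₁, γ₂, γ₁₂, c ∈ ℝ. Define M i j = F(γ₁·a i + γ₂·b j + γ₁₂·a i·b j + c) for i ∈ {1,2,3,4}, j ∈ {1,2,3}. Then the following four strict inequality chains cannot all simultaneously hold: (1) M 1 2 < M 2 1 < M 3 1 < M 2 2; (2) M 2 2 < M 1 3 < M 2 3 < M 3 2; (3) M 3 1 < M 2 2 < M 3 2 < M 4 1; (4) M 2 3 < M 3 2 < M 4 2 < M 3 3. -/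
/-!
Monotonicity of `F` carries every strict inequality between entries of `M` over to
`L i j = γ₁ aᵢ + γ₂ bⱼ + γ₁₂ aᵢ bⱼ + c`. Four of the comparisons (`CrossCycle`) have the same
row indices and the same column indices on both sides, so no matrix `φ (uᵢ + vⱼ)` with `φ`
strictly monotone or strictly antitone satisfies them: adding up the four comparisons of the
sums `uᵢ + vⱼ` gives `0 < 0`. If `γ₁₂ = 0`, `L` is already additive. Otherwise
`γ₁₂ L i j = qᵢ pⱼ + γ₁₂ c - γ₁ γ₂` with slopes `qᵢ = γ₂ + γ₁₂ aᵢ`, `pⱼ = γ₁ + γ₁₂ bⱼ`; the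
other comparisons force the `qᵢ` of rows 2–4 to share one strict sign and the `pⱼ` another, and
then `log |qᵢ pⱼ| = log |qᵢ| + log |pⱼ|` exhibits `L` as a strictly monotone or antitone
function of an additive matrix.
-/

open Real

def bilin (γ₁ γ₂ γ₁₂ c x y : ℝ) : ℝ := γ₁ * x + γ₂ * y + γ₁₂ * (x * y) + c

def OrdinallyAdditive {ι κ : Type*} (f : ι → κ → ℝ) : Prop :=
  ∃ φ : ℝ → ℝ, (StrictMono φ ∨ StrictAnti φ) ∧ ∃ u : ι → ℝ, ∃ v : κ → ℝ,
    ∀ i j, f i j = φ (u i + v j)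

/-- Each row index and each column index occurs equally often on the two sides. -/
def CrossCycle (f : Fin 3 → Fin 3 → ℝ) : Prop :=
  f 1 0 < f 0 1 ∧ f 0 2 < f 1 1 ∧ f 1 1 < f 2 0 ∧ f 2 1 < f 1 2

theorem OrdinallyAdditive.not_crossCycle {f : Fin 3 → Fin 3 → ℝ} (hf : OrdinallyAdditive f) :
    ¬ CrossCycle f := by
  obtain ⟨φ, hφ, u, v, huv⟩ := hf
  simp only [CrossCycle, huv]
  rcases hφ with hφ | hφ
  · simp only [hφ.lt_iff_lt]; rintro ⟨h₁, h₂, h₃, h₄⟩; linarith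
  · simp only [hφ.lt_iff_gt]; rintro ⟨h₁, h₂, h₃, h₄⟩; linarith

theorem pos_mul_of_pos_mul {a b c d : ℝ} (hac : 0 < a * c) (hbc : 0 < b * c) (had : 0 < a * d) :
    0 < b * d := by
  have hab : 0 < a * b := pos_of_mul_pos_left (by nlinarith) (mul_self_nonneg c)
  nlinarith [mul_pos hab had]

theorem StrictMono.const_mul_or_strictAnti {f : ℝ → ℝ} (hf : StrictMono f) {k : ℝ} (hk : k ≠ 0) :
    StrictMono (fun x => k * f x) ∨ StrictAnti (fun x => k * f x) := by
  rcases hk.lt_or_gt with hk | hk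
  · exact Or.inr (hf.const_mul_of_neg hk)
  · exact Or.inl (hf.const_mul hk)

section Bilin

variable {γ₁ γ₂ γ₁₂ c : ℝ}

local notation "B" => bilin γ₁ γ₂ γ₁₂ c

theorem bilin_lt_bilin_left_iff {x x' y : ℝ} : B x' y < B x y ↔ 0 < (γ₁ + γ₁₂ * y) * (x - x') := by
  rw [← sub_pos]; unfold bilin; ring_nf

theorem bilin_lt_bilin_right_iff {x y y' : ℝ} : B x y' < B x y ↔ 0 < (γ₂ + γ₁₂ * x) * (y - y') := by
  rw [← sub_pos]; unfold bilin; ring_nf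

theorem mul_bilin (x y : ℝ) :
    γ₁₂ * B x y = (γ₂ + γ₁₂ * x) * (γ₁ + γ₁₂ * y) + (γ₁₂ * c - γ₁ * γ₂) := by
  unfold bilin; ring

theorem ordinallyAdditive_bilin {ι κ : Type*} [Nonempty ι] [Nonempty κ] {x : ι → ℝ} {y : κ → ℝ}
    {σ τ : ℝ} (hx : ∀ i, 0 < (γ₂ + γ₁₂ * x i) * σ) (hy : ∀ j, 0 < (γ₁ + γ₁₂ * y j) * τ) :
    OrdinallyAdditive (fun i j => B (x i) (y j)) := by
  rcases eq_or_ne γ₁₂ 0 with hγ | hγ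
  · refine ⟨id, Or.inl strictMono_id, fun i => γ₁ * x i, fun j => γ₂ * y j + c, fun i j => ?_⟩
    simp only [bilin, hγ, id]; ring
  have hσ : σ ≠ 0 := by rintro rfl; simpa using hx (Classical.arbitrary ι)
  have hτ : τ ≠ 0 := by rintro rfl; simpa using hy (Classical.arbitrary κ)
  refine ⟨fun t => (σ * τ * γ₁₂)⁻¹ * exp t + (c - γ₁ * γ₂ / γ₁₂), ?_,
    fun i => log ((γ₂ + γ₁₂ * x i) * σ), fun j => log ((γ₁ + γ₁₂ * y j) * τ), fun i j => ?_⟩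
  · exact (exp_strictMono.const_mul_or_strictAnti (by positivity)).imp
      (·.add_const _) (·.add_const _)
  · beta_reduce
    rw [exp_add, exp_log (hx i), exp_log (hy j)]
    field_simp
    linear_combination mul_bilin (γ₁ := γ₁) (γ₂ := γ₂) (γ₁₂ := γ₁₂) (c := c) (x i) (y j)

theorem slopes_sign_of_crossCycle {x y : Fin 3 → ℝ} (hcyc : CrossCycle fun i j => B (x i) (y j))
    (h₀₀ : B (x 0) (y 0) < B (x 1) (y 0)) (h₀₁ : B (x 0) (y 1) < B (x 1) (y 1))
    (h₁₁ : B (x 1) (y 1) < B (x 2) (y 1)) :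
    (∀ i, 0 < (γ₂ + γ₁₂ * x i) * (y 1 - y 0)) ∧ (∀ j, 0 < (γ₁ + γ₁₂ * y j) * (x 1 - x 0)) := by
  obtain ⟨h₁₀, h₀₂, -, h₂₁⟩ := hcyc
  have hp₀ := bilin_lt_bilin_left_iff.1 h₀₀
  have hp₁ := bilin_lt_bilin_left_iff.1 h₀₁
  have hp₂ := bilin_lt_bilin_left_iff.1 (h₀₂.trans (h₁₁.trans h₂₁))
  have hq₀ := bilin_lt_bilin_right_iff.1 (h₀₀.trans h₁₀)
  have hq₁ := bilin_lt_bilin_right_iff.1 (h₁₀.trans h₀₁)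
  have hq₁' := bilin_lt_bilin_right_iff.1 (h₁₁.trans h₂₁)
  have hp₂' := pos_mul_of_pos_mul hp₁ hp₂ (bilin_lt_bilin_left_iff.1 h₁₁)
  have hq₂' := bilin_lt_bilin_right_iff.1 (h₂₁.trans (bilin_lt_bilin_left_iff.2 hp₂'))
  refine ⟨Fin.forall_fin_succ.2 ⟨hq₀, Fin.forall_fin_succ.2 ⟨hq₁, ?_⟩⟩,
    Fin.forall_fin_succ.2 ⟨hp₀, Fin.forall_fin_succ.2 ⟨hp₁, ?_⟩⟩⟩ <;> intro i <;> fin_cases i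
  · exact pos_mul_of_pos_mul hq₁' hq₂' hq₁
  · exact hp₂

end Bilin

/-- A 4×3 matrix `M i j = F (γ₁ aᵢ + γ₂ bⱼ + γ₁₂ aᵢ bⱼ + c)` with `F` non-decreasing cannot
satisfy all four strict chains (0-based indices):
(1) `M₁₂ < M₂₁ < M₃₁ < M₂₂`, (2) `M₂₂ < M₁₃ < M₂₃ < M₃₂`,
(3) `M₃₁ < M₂₂ < M₃₂ < M₄₁`, (4) `M₂₃ < M₃₂ < M₄₂ < M₃₃`. -/
theorem stmt_3 (F : ℝ → ℝ) (hF : Monotone F) (a : Fin 4 → ℝ) (b : Fin 3 → ℝ)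
    (γ₁ γ₂ γ₁₂ c : ℝ) (M : Fin 4 → Fin 3 → ℝ)
    (hM : ∀ i j, M i j = F (γ₁ * a i + γ₂ * b j + γ₁₂ * (a i * b j) + c)) :
    ¬ ((M 0 1 < M 1 0 ∧ M 1 0 < M 2 0 ∧ M 2 0 < M 1 1) ∧
       (M 1 1 < M 0 2 ∧ M 0 2 < M 1 2 ∧ M 1 2 < M 2 1) ∧
       (M 2 0 < M 1 1 ∧ M 1 1 < M 2 1 ∧ M 2 1 < M 3 0) ∧
       (M 1 2 < M 2 1 ∧ M 2 1 < M 3 1 ∧ M 3 1 < M 2 2)) := by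
  rintro ⟨⟨-, h₁₀_₂₀, h₂₀_₁₁⟩, ⟨-, -, h₁₂_₂₁⟩, ⟨-, h₁₁_₂₁, h₂₁_₃₀⟩, ⟨-, h₂₁_₃₁, h₃₁_₂₂⟩⟩
  set L : Fin 3 → Fin 3 → ℝ := fun i j => bilin γ₁ γ₂ γ₁₂ c (a i.succ) (b j)
  have hML {i j k l} (h : M i.succ j < M k.succ l) : L i j < L k l := by
    rw [hM, hM] at h; exact hF.reflect_lt h
  have hcyc : CrossCycle L :=
    ⟨hML h₂₀_₁₁, hML h₁₂_₂₁, hML h₂₁_₃₀, hML h₃₁_₂₂⟩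
  obtain ⟨hq, hp⟩ := slopes_sign_of_crossCycle hcyc (hML h₁₀_₂₀) (hML h₁₁_₂₁) (hML h₂₁_₃₁)
  exact (ordinallyAdditive_bilin hq hp).not_crossCycle hcyc
end

section
/- With the same setup, suppose α_{1,0} = 1/4, α_{0,1} = 0, α_{1,1} = 1, N_{0,1} = 0, and N_{1,0}, N_{1,1} > 0. Then the least squares solution satisfies a₁ < a₂, even though the true function f satisfies f(1,0) > f(0,1). -/
/-!
With no observations at `(0,1)`, the model `a₁x₁ + a₂x₂` can interpolate the remaining
labels exactly: `a₁ = α₁₀` from the input `(1,0)` and then `a₂ = α₁₁ - α₁₀` from `(1,1)`.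
Interpolation attains the unavoidable error `N₀₀ α₀₀²`, so it is the unique minimizer, and for
`α₁₀ = 1/4`, `α₁₁ = 1` it gives `a₁ = 1/4 < 3/4 = a₂`.
-/

/-- The least-squares objective for fitting `a₁x₁ + a₂x₂` on binary inputs with counts
`N_{x₁,x₂}` and noiseless labels `α_{x₁,x₂}`. -/
noncomputable def olsObj (N00 N10 N01 N11 : ℕ) (α00 α10 α01 α11 : ℝ) (a₁ a₂ : ℝ) : ℝ :=
  (N00 : ℝ) * α00 ^ 2 + (N10 : ℝ) * (α10 - a₁) ^ 2 + (N01 : ℝ) * (α01 - a₂) ^ 2 +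
    (N11 : ℝ) * (α11 - a₁ - a₂) ^ 2

lemma eq_zero_and_eq_zero_of_mul_sq_add_mul_sq_nonpos {p q x y : ℝ} (hp : 0 < p) (hq : 0 < q)
    (h : p * x ^ 2 + q * y ^ 2 ≤ 0) : x = 0 ∧ y = 0 := by
  have hx := mul_nonneg hp.le (sq_nonneg x)
  have hy := mul_nonneg hq.le (sq_nonneg y)
  obtain ⟨hx₀, hy₀⟩ := (add_eq_zero_iff_of_nonneg hx hy).mp (le_antisymm h (add_nonneg hx hy))
  exact ⟨by simpa [hp.ne'] using hx₀, by simpa [hq.ne'] using hy₀⟩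

section NoObservationsAtZeroOne

variable {N00 N10 N11 : ℕ} {α00 α10 α01 α11 : ℝ}

lemma olsObj_N01_zero_interpolant :
    olsObj N00 N10 0 N11 α00 α10 α01 α11 α10 (α11 - α10) = N00 * α00 ^ 2 := by
  simp [olsObj]

lemma olsObj_N01_zero (a₁ a₂ : ℝ) :
    olsObj N00 N10 0 N11 α00 α10 α01 α11 a₁ a₂ =
      N00 * α00 ^ 2 + (N10 * (α10 - a₁) ^ 2 + N11 * (α11 - a₁ - a₂) ^ 2) := by
  simp only [olsObj, Nat.cast_zero, zero_mul, add_zero]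
  ring

theorem eq_interpolant_of_forall_olsObj_le (hN10 : 0 < N10) (hN11 : 0 < N11) {a₁ a₂ : ℝ}
    (hmin : ∀ b₁ b₂ : ℝ, olsObj N00 N10 0 N11 α00 α10 α01 α11 a₁ a₂ ≤
      olsObj N00 N10 0 N11 α00 α10 α01 α11 b₁ b₂) :
    a₁ = α10 ∧ a₂ = α11 - α10 := by
  have h := hmin α10 (α11 - α10)
  rw [olsObj_N01_zero_interpolant, olsObj_N01_zero, add_le_iff_nonpos_right] at h
  obtain ⟨h₁, h₂⟩ := eq_zero_and_eq_zero_of_mul_sq_add_mul_sq_nonpos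
    (Nat.cast_pos.mpr hN10) (Nat.cast_pos.mpr hN11) h
  constructor <;> linarith

end NoObservationsAtZeroOne

theorem stmt_8_general (N00 N10 N01 N11 : ℕ) (α00 α10 α01 α11 : ℝ)
    (hα10 : α10 = 1 / 4) (hα01 : α01 = 0) (hα11 : α11 = 1)
    (hN01 : N01 = 0) (hN10 : 0 < N10) (hN11 : 0 < N11)
    (a₁ a₂ : ℝ)
    (hmin : ∀ b₁ b₂ : ℝ, olsObj N00 N10 N01 N11 α00 α10 α01 α11 a₁ a₂ ≤
      olsObj N00 N10 N01 N11 α00 α10 α01 α11 b₁ b₂) :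
    a₁ < a₂ ∧ α10 > α01 := by
  subst hN01
  obtain ⟨rfl, rfl⟩ := eq_interpolant_of_forall_olsObj_le hN10 hN11 hmin
  subst hα10 hα01 hα11
  norm_num

/-- With `α₁₀ = 1/4`, `α₀₁ = 0`, `α₁₁ = 1`, `N₀₁ = 0` and `N₁₀, N₁₁ > 0`, any least-squares
minimizer satisfies `a₁ < a₂`, even though the true function has `f(1,0) > f(0,1)`,
i.e. `α₁₀ > α₀₁`. -/
theorem stmt_8 (N00 N10 N01 N11 : ℕ) (α00 α10 α01 α11 : ℝ)
    (hα00 : α00 = 0) (hα10 : α10 = 1 / 4) (hα01 : α01 = 0) (hα11 : α11 = 1)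
    (hN01 : N01 = 0) (hN10 : 0 < N10) (hN11 : 0 < N11)
    (a₁ a₂ : ℝ)
    (hmin : ∀ b₁ b₂ : ℝ, olsObj N00 N10 N01 N11 α00 α10 α01 α11 a₁ a₂ ≤
      olsObj N00 N10 N01 N11 α00 α10 α01 α11 b₁ b₂) :
    a₁ < a₂ ∧ α10 > α01 :=
  stmt_8_general N00 N10 N01 N11 α00 α10 α01 α11 hα10 hα01 hα11 hN01 hN10 hN11 a₁ a₂ hmin
end

section
/- Let M be a 4×4 real matrix and suppose M is 'bivariate isotonic with interactions', i.e., M i j = F(γ₁ a_i + γ₂ b_j + γ₁₂ a_i b_j + c) for some non-decreasing F and reals. Let B = (1/12)·[[1,2,6,12],[3,5,7,12],[4,8,11,12],[9,10,12,12]]. Then ‖M − B‖_F² ≥ 1/288, where ‖·‖_F is the Frobenius norm. -/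
/-!
Write `u i j = γ₁ aᵢ + γ₂ bⱼ + γ₁₂ aᵢbⱼ + c = (γ₁ + γ₁₂ bⱼ) aᵢ + (γ₂ bⱼ + c)`. Within each column
the gaps between rows are `aᵢ' - aᵢ` scaled by a column factor, so ratios of row gaps do not
depend on the column. If `M` were within squared distance `1/288` of `B`, then `M`, and hence
`u` (as `F` is monotone), would inherit nine strict inequalities between entries of `B` that
are `1/12` apart. With `P, Q, R` the consecutive row gaps of column 1, they force
`Q / R < P / Q < Q / R`, comparing with columns 0 and 2 respectively.
-/

lemma half_sq_le_sq_add_sq_of_le {x y β γ d : ℝ} (hd : 0 ≤ d) (hxy : y ≤ x) (hβγ : β + d ≤ γ) :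
    d ^ 2 / 2 ≤ (x - β) ^ 2 + (y - γ) ^ 2 := by
  nlinarith [sq_nonneg (x - β + (y - γ))]

lemma lt_of_sum_sq_sub_lt {ι : Type*} [Fintype ι] {m β : ι → ℝ} {d : ℝ} (hd : 0 ≤ d)
    (h : ∑ k, (m k - β k) ^ 2 < d ^ 2 / 2) {x y : ι} (hxy : x ≠ y) (hβ : β x + d ≤ β y) :
    m x < m y := by
  by_contra! hle
  have hpair := half_sq_le_sq_add_sq_of_le hd hle hβ
  have hsum : (m x - β x) ^ 2 + (m y - β y) ^ 2 ≤ ∑ k, (m k - β k) ^ 2 :=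
    Finset.add_le_sum (f := fun k => (m k - β k) ^ 2) (fun k _ => sq_nonneg _)
      (Finset.mem_univ x) (Finset.mem_univ y) hxy
  linarith

lemma false_of_gap_ratios {P Q R A₁ A₂ C₁ C₂ : ℝ} (hP : 0 < P) (hQ : 0 < Q) (hR : 0 < R)
    (hA₁ : A₁ < P) (hA₂ : Q < A₂) (hC₁ : C₁ < Q) (hC₂ : R < C₂)
    (hA : A₁ * R = Q * A₂) (hC : C₁ * Q = P * C₂) : False :=
  lt_irrefl (Q * Q) <|
    calc Q * Q < Q * A₂ := mul_lt_mul_of_pos_left hA₂ hQ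
      _ = A₁ * R := hA.symm
      _ < P * R := mul_lt_mul_of_pos_right hA₁ hR
      _ < P * C₂ := mul_lt_mul_of_pos_left hC₂ hP
      _ = C₁ * Q := hC.symm
      _ < Q * Q := mul_lt_mul_of_pos_right hC₁ hQ

section RowAffine

variable {ι κ : Type*} {u : ι → κ → ℝ} {a : ι → ℝ} {p q : κ → ℝ}

lemma rowGap_mul_rowGap_comm (hu : ∀ i j, u i j = p j * a i + q j) (i i' k k' : ι) (j l : κ) :
    (u i' j - u i j) * (u k' l - u k l) = (u i' l - u i l) * (u k' j - u k j) := by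
  simp only [hu]
  ring

lemma false_of_rowAffine_chains (hu : ∀ i j, u i j = p j * a i + q j)
    {i₀ i₁ i₂ i₃ : ι} {j₀ j₁ j₂ : κ}
    (h₁ : u i₀ j₁ < u i₁ j₀) (h₂ : u i₁ j₀ < u i₂ j₀) (h₃ : u i₂ j₀ < u i₁ j₁)
    (h₄ : u i₁ j₁ < u i₀ j₂) (h₅ : u i₁ j₂ < u i₂ j₁)
    (h₆ : u i₁ j₁ < u i₂ j₁) (h₇ : u i₂ j₁ < u i₃ j₀)
    (h₈ : u i₂ j₁ < u i₃ j₁) (h₉ : u i₃ j₁ < u i₂ j₂) : False :=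
  false_of_gap_ratios (P := u i₁ j₁ - u i₀ j₁) (Q := u i₂ j₁ - u i₁ j₁) (R := u i₃ j₁ - u i₂ j₁)
    (A₁ := u i₂ j₀ - u i₁ j₀) (A₂ := u i₃ j₀ - u i₂ j₀)
    (C₁ := u i₁ j₂ - u i₀ j₂) (C₂ := u i₂ j₂ - u i₁ j₂)
    (by linarith) (by linarith) (by linarith) (by linarith) (by linarith) (by linarith)
    (by linarith) (rowGap_mul_rowGap_comm hu ..) (rowGap_mul_rowGap_comm hu ..)

end RowAffine

/-- If a 4×4 matrix `M` has the interaction form `M i j = F (γ₁ aᵢ + γ₂ bⱼ + γ₁₂ aᵢbⱼ + c)`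
with `F` non-decreasing, then its squared Frobenius distance to the explicit isotonic
matrix `B = (1/12)[[1,2,6,12],[3,5,7,12],[4,8,11,12],[9,10,12,12]]` is at least `1/288`. -/
theorem stmt_9 (F : ℝ → ℝ) (hF : Monotone F) (a b : Fin 4 → ℝ) (γ₁ γ₂ γ₁₂ c : ℝ)
    (M : Fin 4 → Fin 4 → ℝ)
    (hM : ∀ i j, M i j = F (γ₁ * a i + γ₂ * b j + γ₁₂ * (a i * b j) + c))
    (B : Matrix (Fin 4) (Fin 4) ℝ)
    (hB : B = ((1 : ℝ) / 12) •
      !![(1:ℝ), 2, 6, 12; 3, 5, 7, 12; 4, 8, 11, 12; 9, 10, 12, 12]) :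
    (1 : ℝ) / 288 ≤ ∑ i : Fin 4, ∑ j : Fin 4, (M i j - B i j) ^ 2 := by
  let u : Fin 4 → Fin 4 → ℝ := fun i j => γ₁ * a i + γ₂ * b j + γ₁₂ * (a i * b j) + c
  have hu : ∀ i j, u i j = (γ₁ + γ₁₂ * b j) * a i + (γ₂ * b j + c) := fun i j => by ring
  by_contra! hlt
  rw [← Fintype.sum_prod_type'] at hlt
  have hlt' := hlt.trans_eq (by norm_num : (1 : ℝ) / 288 = (1 / 12) ^ 2 / 2)
  have hu_lt : ∀ i j i' j', (i, j) ≠ (i', j') → B i j + 1 / 12 ≤ B i' j' → u i j < u i' j' := by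
    intro i j i' j' hne hgap
    have hMlt := lt_of_sum_sq_sub_lt (m := fun k => M k.1 k.2) (by norm_num) hlt' hne hgap
    simp only [hM] at hMlt
    exact hF.reflect_lt hMlt
  subst hB
  refine false_of_rowAffine_chains hu
    (hu_lt 0 1 1 0 ?_ ?_) (hu_lt 1 0 2 0 ?_ ?_) (hu_lt 2 0 1 1 ?_ ?_)
    (hu_lt 1 1 0 2 ?_ ?_) (hu_lt 1 2 2 1 ?_ ?_)
    (hu_lt 1 1 2 1 ?_ ?_) (hu_lt 2 1 3 0 ?_ ?_)
    (hu_lt 2 1 3 1 ?_ ?_) (hu_lt 3 1 2 2 ?_ ?_)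
  all_goals simp [Matrix.smul_apply] <;> norm_num
end

section
/- Let S ⊆ X = (Fin m)^d be nonempty and let f : S → [0,1] be isotonic on S (f(z) ≥ f(z') whenever z ≥ z' coordinate-wise for z, z' ∈ S). Extend f to all of X by setting, for x ∉ S, f̂(x) = (min A(x) + max B(x))/2, where A(x) = {f(z) : z ∈ S, z ≥ x} ∪ {max_{z∈S} f(z)} and B(x) = {f(z) : z ∈ S, z ≤ x} ∪ {min_{z∈S} f(z)}, and f̂(x) = f(x) for x ∈ S. Then f̂ is isotonic on X and takes values in [0,1]. -/
open Finset

/-- The interpolated extension of an isotonic partial function `f` observed on a nonempty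
finite set `S ⊆ (Fin m)^d`: on `S` it equals `f`; off `S` it is the average of
`min A(x)` and `max B(x)`, where
`A(x) = {f z : z ∈ S, z ≥ x} ∪ {max_{z∈S} f z}` and
`B(x) = {f z : z ∈ S, z ≤ x} ∪ {min_{z∈S} f z}`. -/
noncomputable def interpExt (d m : ℕ) (S : Finset (Fin d → Fin m)) (hS : S.Nonempty)
    (f : (Fin d → Fin m) → ℝ) (x : Fin d → Fin m) : ℝ :=
  if x ∈ S then f x
  else
    ((insert (S.sup' hS f) ((S.filter (fun z => ∀ k, x k ≤ z k)).image f)).min'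
        (Finset.insert_nonempty _ _) +
      (insert (S.inf' hS f) ((S.filter (fun z => ∀ k, z k ≤ x k)).image f)).max'
        (Finset.insert_nonempty _ _)) / 2

/-!
Write `U x` for the least observed value at or above `x` and `L x` for the greatest one at or
below `x`. Raising `x` shrinks the set defining `U x` and enlarges the one defining `L x`, so
both envelopes are monotone. For an observed point `z ≤ y`, isotonicity gives `f z ≤ U y`, and
`f z ≤ L y` because `f z` is one of the values defining `L y`; symmetrically `U x, L x ≤ f y`
for an observed `y ≥ x`. Both envelopes are observed values, hence lie in `[0, 1]`.
-/

noncomputable section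

section Envelope

variable {α β : Type*} [Preorder α] [LinearOrder β] [DecidableLE α]
  (S : Finset α) (hS : S.Nonempty) (f : α → β)

def upperEnvelope (x : α) : β :=
  (insert (S.sup' hS f) ((S.filter (x ≤ ·)).image f)).min' (insert_nonempty _ _)

def lowerEnvelope (x : α) : β :=
  (insert (S.inf' hS f) ((S.filter (· ≤ x)).image f)).max' (insert_nonempty _ _)

variable {S f}

theorem upperEnvelope_mono : Monotone (upperEnvelope S hS f) := by
  intro x y hxy
  refine min'_subset _ (insert_subset_insert _ (image_subset_image fun z hz => ?_))
  rw [mem_filter] at hz ⊢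
  exact ⟨hz.1, hxy.trans hz.2⟩

theorem lowerEnvelope_mono : Monotone (lowerEnvelope S hS f) := by
  intro x y hxy
  refine max'_subset _ (insert_subset_insert _ (image_subset_image fun z hz => ?_))
  rw [mem_filter] at hz ⊢
  exact ⟨hz.1, hz.2.trans hxy⟩

theorem exists_mem_eq_upperEnvelope (x : α) : ∃ z ∈ S, f z = upperEnvelope S hS f x := by
  unfold upperEnvelope
  rcases mem_insert.1 (min'_mem _ (insert_nonempty (S.sup' hS f) _)) with h | h
  · obtain ⟨z, hz, hfz⟩ := exists_mem_eq_sup' hS f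
    exact ⟨z, hz, hfz.symm.trans h.symm⟩
  · obtain ⟨z, hz, hfz⟩ := mem_image.1 h
    exact ⟨z, (mem_filter.1 hz).1, hfz⟩

theorem exists_mem_eq_lowerEnvelope (x : α) : ∃ z ∈ S, f z = lowerEnvelope S hS f x := by
  unfold lowerEnvelope
  rcases mem_insert.1 (max'_mem _ (insert_nonempty (S.inf' hS f) _)) with h | h
  · obtain ⟨z, hz, hfz⟩ := exists_mem_eq_inf' hS f
    exact ⟨z, hz, hfz.symm.trans h.symm⟩
  · obtain ⟨z, hz, hfz⟩ := mem_image.1 h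
    exact ⟨z, (mem_filter.1 hz).1, hfz⟩

theorem upperEnvelope_le {x y : α} (hy : y ∈ S) (hxy : x ≤ y) : upperEnvelope S hS f x ≤ f y :=
  min'_le _ _ (mem_insert_of_mem (mem_image_of_mem f (mem_filter.2 ⟨hy, hxy⟩)))

theorem le_lowerEnvelope {x y : α} (hx : x ∈ S) (hxy : x ≤ y) : f x ≤ lowerEnvelope S hS f y :=
  le_max' _ _ (mem_insert_of_mem (mem_image_of_mem f (mem_filter.2 ⟨hx, hxy⟩)))

theorem MonotoneOn.le_upperEnvelope (hf : MonotoneOn f S) {x y : α} (hx : x ∈ S) (hxy : x ≤ y) :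
    f x ≤ upperEnvelope S hS f y := by
  refine le_min' _ _ _ fun a ha => ?_
  rcases mem_insert.1 ha with rfl | ha
  · exact le_sup' f hx
  · obtain ⟨z, hz, rfl⟩ := mem_image.1 ha
    rw [mem_filter] at hz
    exact hf hx hz.1 (hxy.trans hz.2)

theorem MonotoneOn.lowerEnvelope_le (hf : MonotoneOn f S) {x y : α} (hy : y ∈ S) (hxy : x ≤ y) :
    lowerEnvelope S hS f x ≤ f y := by
  refine max'_le _ _ _ fun b hb => ?_
  rcases mem_insert.1 hb with rfl | hb
  · exact inf'_le f hy
  · obtain ⟨z, hz, rfl⟩ := mem_image.1 hb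
    rw [mem_filter] at hz
    exact hf hz.1 hy (hz.2.trans hxy)

end Envelope

section Interpolation

variable {α : Type*} [Preorder α] [DecidableLE α] [DecidableEq α]
  (S : Finset α) (hS : S.Nonempty) (f : α → ℝ)

def isotonicInterp (x : α) : ℝ :=
  if x ∈ S then f x else (upperEnvelope S hS f x + lowerEnvelope S hS f x) / 2

variable {S f}

theorem monotone_isotonicInterp (hf : MonotoneOn f S) : Monotone (isotonicInterp S hS f) := by
  intro x y hxy
  unfold isotonicInterp
  split_ifs with hx hy hy
  · exact hf hx hy hxy
  · linarith [hf.le_upperEnvelope hS hx hxy, le_lowerEnvelope hS (f := f) hx hxy]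
  · linarith [upperEnvelope_le hS (f := f) hy hxy, hf.lowerEnvelope_le hS hy hxy]
  · linarith [upperEnvelope_mono hS (f := f) hxy, lowerEnvelope_mono hS (f := f) hxy]

theorem isotonicInterp_mem_Icc {a b : ℝ} (hf : ∀ z ∈ S, f z ∈ Set.Icc a b) (x : α) :
    isotonicInterp S hS f x ∈ Set.Icc a b := by
  unfold isotonicInterp
  split_ifs with hx
  · exact hf x hx
  · obtain ⟨z, hz, hzU⟩ := exists_mem_eq_upperEnvelope hS (f := f) x
    obtain ⟨w, hw, hwL⟩ := exists_mem_eq_lowerEnvelope hS (f := f) x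
    obtain ⟨hz₁, hz₂⟩ := hf z hz
    obtain ⟨hw₁, hw₂⟩ := hf w hw
    constructor <;> linarith

end Interpolation

end

theorem interpExt_eq_isotonicInterp (d m : ℕ) [DecidableLE (Fin d → Fin m)]
    (S : Finset (Fin d → Fin m)) (hS : S.Nonempty) (f : (Fin d → Fin m) → ℝ) :
    interpExt d m S hS f = isotonicInterp S hS f := by
  funext x
  simp only [interpExt, isotonicInterp, upperEnvelope, lowerEnvelope, Pi.le_def]
  congr

/-- Interpolating an isotonic `[0,1]`-valued partial function on a nonempty `S ⊆ (Fin m)^d`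
by averaging the smallest dominating and largest dominated observed values yields an
isotonic total function with values in `[0,1]`. -/
theorem stmt_14 (d m : ℕ) (S : Finset (Fin d → Fin m)) (hS : S.Nonempty)
    (f : (Fin d → Fin m) → ℝ)
    (hf01 : ∀ z ∈ S, f z ∈ Set.Icc (0 : ℝ) 1)
    (hiso : ∀ z ∈ S, ∀ z' ∈ S, (∀ k, z' k ≤ z k) → f z' ≤ f z) :
    (∀ x y : Fin d → Fin m, (∀ k, x k ≤ y k) →
      interpExt d m S hS f x ≤ interpExt d m S hS f y) ∧
    (∀ x, interpExt d m S hS f x ∈ Set.Icc (0 : ℝ) 1) := by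
  classical
  rw [interpExt_eq_isotonicInterp]
  have hmono : MonotoneOn f S := fun z hz z' hz' hzz' => hiso z' hz' z hz hzz'
  exact ⟨fun x y hxy => monotone_isotonicInterp hS hmono hxy, isotonicInterp_mem_Icc hS hf01⟩
end
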